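/- Let H be a Hilbert space, u^1, …, u^m ∈ H snapshots, K their Gram matrix with positive eigenvalues λ₁ ≥ … ≥ λ_d > 0 and orthonormal eigenvectors x₁,…,x_d ∈ ℝ^m, and φ_k the associated POD modes. Then Σ_{j=1}^m ‖u^j − Σ_{k=1}^r ⟨u^j, φ_k⟩ φ_k‖² = Σ_{k=r+1}^d λ_k for every 0 ≤ r ≤ d. -/

import Mathlib

/-!
With `K = Σ_k λ_k x_k x_kᵀ` and `K x_k = λ_k x_k`, one computes `⟪u^j, φ_k⟫ = √λ_k (x_k)_j`.
Hence the modes `φ_k` are orthonormal, so Pythagoras gives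
`‖u^j - Σ_{k<r} ⟪u^j, φ_k⟫ φ_k‖² = ‖u^j‖² - Σ_{k<r} λ_k (x_k)_j²`. Summing over `j` and using
`Σ_j ‖u^j‖² = tr K = Σ_k λ_k` and `Σ_j (x_k)_j² = 1` leaves `Σ_k λ_k - Σ_{k<r} λ_k`.
-/

open Finset Matrix

section POD

variable {E : Type*} [NormedAddCommGroup E] [InnerProductSpace ℝ E] {ι κ : Type*} [Fintype ι]

theorem Orthonormal.norm_sub_sum_inner_smul_sq {v : κ → E} (hv : Orthonormal ℝ v)
    (s : Finset κ) (y : E) :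
    ‖y - ∑ k ∈ s, inner ℝ y (v k) • v k‖ ^ 2 = ‖y‖ ^ 2 - ∑ k ∈ s, inner ℝ y (v k) ^ 2 := by
  have hcross : inner ℝ y (∑ k ∈ s, inner ℝ y (v k) • v k) = ∑ k ∈ s, inner ℝ y (v k) ^ 2 := by
    simp only [inner_sum, real_inner_smul_right, sq]
  have hproj : ‖∑ k ∈ s, inner ℝ y (v k) • v k‖ ^ 2 = ∑ k ∈ s, inner ℝ y (v k) ^ 2 := by
    rw [← real_inner_self_eq_norm_sq, hv.inner_sum]
    simp only [conj_trivial, sq]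
  rw [norm_sub_sq_real, hcross, hproj]
  ring

noncomputable def podMode (u : ι → E) (μ : ℝ) (c : ι → ℝ) : E :=
  (√μ)⁻¹ • ∑ j, c j • u j

theorem inner_podMode {u : ι → E} {μ : ℝ} {c : ι → ℝ} (hc : gram ℝ u *ᵥ c = μ • c) (i : ι) :
    inner ℝ (u i) (podMode u μ c) = √μ * c i := by
  have hci := congrFun hc i
  simp only [mulVec, dotProduct, gram_apply, Pi.smul_apply, smul_eq_mul] at hci
  simp only [podMode, real_inner_smul_right, inner_sum, mul_comm (c _), hci]
  rw [← mul_assoc, inv_mul_eq_div, Real.div_sqrt]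

theorem orthonormal_podMode [DecidableEq κ] {u : ι → E} {lam : κ → ℝ} {x : κ → ι → ℝ}
    (hpos : ∀ k, 0 < lam k)
    (heig : ∀ k, gram ℝ u *ᵥ x k = lam k • x k)
    (horth : ∀ k l, ∑ j, x k j * x l j = if k = l then (1 : ℝ) else 0) :
    Orthonormal ℝ fun k => podMode u (lam k) (x k) := by
  rw [orthonormal_iff_ite]
  intro k l
  have hsum : ∑ j, x k j * inner ℝ (u j) (podMode u (lam l) (x l))
      = √(lam l) * ∑ j, x k j * x l j := by
    simp only [inner_podMode (heig l), mul_sum]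
    exact sum_congr rfl fun j _ => by ring
  conv_lhs => rw [podMode]
  rw [real_inner_smul_left, sum_inner]
  simp only [real_inner_smul_left]
  rw [hsum, horth]
  split_ifs with hkl
  · subst hkl
    rw [mul_one, inv_mul_cancel₀ (Real.sqrt_pos.mpr (hpos k)).ne']
  · rw [mul_zero, mul_zero]

theorem sum_inner_podMode_sq {u : ι → E} {μ : ℝ} {c : ι → ℝ} (hμ : 0 ≤ μ)
    (hc : gram ℝ u *ᵥ c = μ • c) (hc1 : ∑ j, c j * c j = 1) :
    ∑ j, inner ℝ (u j) (podMode u μ c) ^ 2 = μ := by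
  calc ∑ j, inner ℝ (u j) (podMode u μ c) ^ 2 = √μ ^ 2 * ∑ j, c j * c j := by
        simp only [inner_podMode hc, mul_sum]
        exact sum_congr rfl fun j _ => by ring
    _ = μ := by rw [Real.sq_sqrt hμ, hc1, mul_one]

theorem sum_norm_sq_eq_sum_of_gram_eq {u : ι → E} {lam : κ → ℝ} {x : κ → ι → ℝ} [Fintype κ]
    (hspec : ∀ i j, gram ℝ u i j = ∑ k, lam k * x k i * x k j)
    (hnorm : ∀ k, ∑ j, x k j * x k j = 1) :
    ∑ j, ‖u j‖ ^ 2 = ∑ k, lam k := by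
  calc ∑ j, ‖u j‖ ^ 2 = ∑ j, ∑ k, lam k * x k j * x k j := by
        simp only [← real_inner_self_eq_norm_sq, ← gram_apply, hspec]
    _ = ∑ k, lam k * ∑ j, x k j * x k j := by
        rw [sum_comm]
        simp only [mul_sum, mul_assoc]
    _ = ∑ k, lam k := by simp only [hnorm, mul_one]

end POD

theorem stmt_19_general {H : Type*} [NormedAddCommGroup H] [InnerProductSpace ℝ H]
    (m d : ℕ) (u : Fin m → H) (K : Matrix (Fin m) (Fin m) ℝ)
    (hK : ∀ i j, K i j = (inner ℝ (u i) (u j) : ℝ))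
    (lam : Fin d → ℝ) (x : Fin d → (Fin m → ℝ))
    (hpos : ∀ k, 0 < lam k)
    (heig : ∀ k, K.mulVec (x k) = lam k • x k)
    (horth : ∀ k l, ∑ j, x k j * x l j = if k = l then (1 : ℝ) else 0)
    (hspec : ∀ i j, K i j = ∑ k, lam k * x k i * x k j)
    (φ : Fin d → H)
    (hφ : ∀ k, φ k = (Real.sqrt (lam k))⁻¹ • ∑ j, x k j • u j)
    (r : ℕ) :
    ∑ j : Fin m, ‖u j - ∑ k ∈ Finset.univ.filter (fun k : Fin d => (k : ℕ) < r),
        (inner ℝ (u j) (φ k) : ℝ) • φ k‖ ^ 2 =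
      ∑ k ∈ Finset.univ.filter (fun k : Fin d => r ≤ (k : ℕ)), lam k := by
  obtain rfl : K = gram ℝ u := Matrix.ext fun i j => hK i j
  obtain rfl : φ = fun k => podMode u (lam k) (x k) := funext hφ
  have hnorm : ∀ k, ∑ j, x k j * x k j = 1 := fun k => by simpa using horth k k
  set S := univ.filter fun k : Fin d => (k : ℕ) < r
  calc _ = ∑ j, (‖u j‖ ^ 2 - ∑ k ∈ S, inner ℝ (u j) (podMode u (lam k) (x k)) ^ 2) :=
        sum_congr rfl fun j _ =>
          (orthonormal_podMode hpos heig horth).norm_sub_sum_inner_smul_sq S (u j)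
    _ = ∑ k, lam k - ∑ k ∈ S, lam k := by
        rw [sum_sub_distrib, sum_norm_sq_eq_sum_of_gram_eq hspec hnorm, sum_comm]
        simp only [sum_inner_podMode_sq (hpos _).le (heig _) (hnorm _)]
    _ = _ := by
        rw [← sum_filter_add_sum_filter_not univ (fun k : Fin d => (k : ℕ) < r) lam]
        simp only [S, not_lt, add_sub_cancel_left]

/-- POD truncation error identity: if `K_{ij} = ⟨u^i, u^j⟩` has the spectral
decomposition `K = Σ_k λ_k x_k x_kᵀ` with positive eigenvalues `λ_k` and
orthonormal eigenvectors `x_k`, and `φ_k = (1/√λ_k) Σ_j (x_k)_j u^j` are the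
POD modes, then for every `r ≤ d`,
`Σ_j ‖u^j − Σ_{k≤r} ⟨u^j, φ_k⟩ φ_k‖² = Σ_{k>r} λ_k`. -/
theorem stmt_19 {H : Type*} [NormedAddCommGroup H] [InnerProductSpace ℝ H]
    (m d : ℕ) (u : Fin m → H) (K : Matrix (Fin m) (Fin m) ℝ)
    (hK : ∀ i j, K i j = (inner ℝ (u i) (u j) : ℝ))
    (lam : Fin d → ℝ) (x : Fin d → (Fin m → ℝ))
    (hpos : ∀ k, 0 < lam k)
    (heig : ∀ k, K.mulVec (x k) = lam k • x k)
    (horth : ∀ k l, ∑ j, x k j * x l j = if k = l then (1 : ℝ) else 0)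
    (hspec : ∀ i j, K i j = ∑ k, lam k * x k i * x k j)
    (φ : Fin d → H)
    (hφ : ∀ k, φ k = (Real.sqrt (lam k))⁻¹ • ∑ j, x k j • u j)
    (r : ℕ) (hr : r ≤ d) :
    ∑ j : Fin m, ‖u j - ∑ k ∈ Finset.univ.filter (fun k : Fin d => (k : ℕ) < r),
        (inner ℝ (u j) (φ k) : ℝ) • φ k‖ ^ 2 =
      ∑ k ∈ Finset.univ.filter (fun k : Fin d => r ≤ (k : ℕ)), lam k :=
  stmt_19_general m d u K hK lam x hpos heig horth hspec φ hφ r
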